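/- For any Roman graph G of order n (that is, a graph with γ_R(G) = 2γ(G)) and any integer t ≥ 2: γ_R(S(G,t)) ≤ γ(G)·n^{t-2}·(2n − 1). -/

import Mathlib

variable {V : Type*}

/-- A Roman dominating function: every vertex with value 0 has a neighbor with value 2. -/
def IsRDF (G : SimpleGraph V) (f : V → Fin 3) : Prop :=
  ∀ v, f v = 0 → ∃ u, G.Adj u v ∧ f u = 2

/-- The weight of a Roman dominating function. -/
def romanWeight [Fintype V] (f : V → Fin 3) : ℕ := ∑ v, (f v : ℕ)

/-- The Roman domination number. -/
noncomputable def gammaR [Fintype V] (G : SimpleGraph V) : ℕ :=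
  sInf {k | ∃ f : V → Fin 3, IsRDF G f ∧ romanWeight f = k}

/-- A dominating set. -/
def IsDomSet (G : SimpleGraph V) (D : Set V) : Prop :=
  ∀ v, v ∈ D ∨ ∃ u ∈ D, G.Adj u v

/-- The domination number. -/
noncomputable def gamma [Fintype V] (G : SimpleGraph V) : ℕ :=
  sInf {k | ∃ D : Set V, IsDomSet G D ∧ D.ncard = k}

/-- The generalized Sierpiński graph `S(G,t)` on words of length `t` over `V`. -/
def sierpinski (G : SimpleGraph V) (t : ℕ) : SimpleGraph (Fin t → V) where
  Adj x y := ∃ i : Fin t, (∀ j, j < i → x j = y j) ∧ G.Adj (x i) (y i) ∧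
    (∀ j, i < j → x j = y i ∧ y j = x i)
  symm := by
    refine ⟨?_⟩
    rintro x y ⟨i, h1, h2, h3⟩
    exact ⟨i, fun j hj => (h1 j hj).symm, h2.symm, fun j hj => ⟨(h3 j hj).2, (h3 j hj).1⟩⟩
  loopless := by
    refine ⟨?_⟩
    rintro x ⟨i, -, h2, -⟩
    exact G.ne_of_adj h2 rfl

/-!
Take a minimum dominating set `D` of `G`. On a word `w a b` of `S(G, t)` put the value 2 if
`b ∈ D` and `a ≠ b`, the value 1 if `a = b ∈ D`, and 0 otherwise. A word `w a v` with `v ∉ D` has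
a `G`-neighbour `d ∈ D` of `v`: if `d ≠ a`, the neighbour `w a d` carries 2; if `d = a`, the
cross edge from `w a v` to `w v a` reaches a word carrying 2. Each of the `n ^ (t - 2)` prefixes
`w` and each `d ∈ D` contribute `2 (n - 1) + 1` to the weight.
-/

open Finset

lemma sum_comp_apply_apply {α β M : Type*} [Fintype α] [DecidableEq α] [Fintype β]
    [AddCommMonoid M] {i k : α} (hik : i ≠ k) (g : β → β → M) :
    ∑ x : α → β, g (x i) (x k) = Fintype.card β ^ (Fintype.card α - 2) • ∑ a, ∑ b, g a b := by
  rw [← (Equiv.funSplitAt k β).symm.sum_comp (fun x => g (x i) (x k)), Fintype.sum_prod_type,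
    Finset.sum_comm (f := g), smul_sum]
  congr 1 with b
  have hcard : Fintype.card { j // j ≠ k } = Fintype.card α - 1 := Fintype.card_subtype_compl _
  have := Fintype.sum_piFinset_apply (fun a => g a b) univ (⟨i, hik⟩ : { j // j ≠ k })
  rw [Fintype.piFinset_univ, hcard, Finset.card_univ, Nat.sub_sub] at this
  simpa [Equiv.funSplitAt, Equiv.piSplitAt, hik] using this

section

variable [Fintype V]

lemma gammaR_le_romanWeight {G : SimpleGraph V} {f : V → Fin 3} (hf : IsRDF G f) :
    gammaR G ≤ romanWeight f :=
  Nat.sInf_le ⟨f, hf, rfl⟩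

lemma exists_isDomSet_card_eq_gamma (G : SimpleGraph V) :
    ∃ D : Finset V, IsDomSet G D ∧ #D = gamma G := by
  classical
  obtain ⟨D, hD, hcard⟩ : gamma G ∈ {k | ∃ D : Set V, IsDomSet G D ∧ D.ncard = k} :=
    Nat.sInf_mem ⟨_, Set.univ, fun v => Or.inl trivial, rfl⟩
  exact ⟨D.toFinset, by simpa using hD, by rw [← hcard, Set.ncard_eq_toFinset_card']⟩

end

section

variable {G : SimpleGraph V}

lemma sierpinski_adj_update_last {m : ℕ} (x : Fin (m + 1) → V) {v : V}
    (h : G.Adj (x (Fin.last m)) v) :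
    (sierpinski G (m + 1)).Adj x (Function.update x (Fin.last m) v) :=
  ⟨Fin.last m, fun j hj => (Function.update_of_ne hj.ne _ _).symm, by simpa,
    fun j hj => absurd hj (Fin.le_last j).not_gt⟩

lemma sierpinski_adj_comp_swap {t : ℕ} (x : Fin t → V) {i k : Fin t} (hik : i < k)
    (hk : ∀ j, i < j → j = k) (h : G.Adj (x i) (x k)) :
    (sierpinski G t).Adj x (x ∘ Equiv.swap i k) :=
  ⟨i, fun j hj => by simp [Equiv.swap_apply_of_ne_of_ne hj.ne (hj.trans hik).ne], by simpa,
    fun j hj => by obtain rfl := hk j hj; simp⟩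

end

section

variable [DecidableEq V]

def lastTwoWeight (D : Finset V) (a b : V) : Fin 3 :=
  if b ∈ D then (if a = b then 1 else 2) else 0

lemma lastTwoWeight_eq_zero_iff {D : Finset V} {a b : V} : lastTwoWeight D a b = 0 ↔ b ∉ D := by
  unfold lastTwoWeight; split_ifs <;> simp_all

lemma lastTwoWeight_of_mem_of_ne {D : Finset V} {a b : V} (hb : b ∈ D) (hab : a ≠ b) :
    lastTwoWeight D a b = 2 := by
  simp [lastTwoWeight, hb, hab]

theorem isRDF_sierpinski_lastTwoWeight {G : SimpleGraph V} {D : Finset V} (hD : IsDomSet G D)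
    (m : ℕ) : IsRDF (sierpinski G (m + 2))
      fun x => lastTwoWeight D (x (Fin.last m).castSucc) (x (Fin.last (m + 1))) := by
  set i : Fin (m + 2) := (Fin.last m).castSucc
  set k : Fin (m + 2) := Fin.last (m + 1)
  intro x hx
  have hxk : x k ∉ D := lastTwoWeight_eq_zero_iff.mp hx
  obtain ⟨d, hdD, hd⟩ : ∃ d ∈ D, G.Adj d (x k) := (hD (x k)).resolve_left (by simpa using hxk)
  obtain rfl | hdi := eq_or_ne d (x i)
  · have hik : i < k := Fin.castSucc_lt_last _
    refine ⟨x ∘ Equiv.swap i k,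
      (sierpinski_adj_comp_swap x hik (fun j hj => ?_) hd).symm, ?_⟩
    · have := j.isLt
      simp only [i, k, Fin.lt_def, Fin.ext_iff, Fin.val_castSucc, Fin.val_last] at hj ⊢
      omega
    · simpa using lastTwoWeight_of_mem_of_ne hdD (ne_of_mem_of_not_mem hdD hxk).symm
  · refine ⟨Function.update x k d, (sierpinski_adj_update_last x hd.symm).symm, ?_⟩
    simpa [i, k, (Fin.castSucc_lt_last (Fin.last m)).ne] using
      lastTwoWeight_of_mem_of_ne hdD hdi.symm

lemma val_lastTwoWeight (D : Finset V) (a b : V) :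
    (lastTwoWeight D a b : ℕ) = if b ∈ D then (if a = b then 1 else 2) else 0 := by
  unfold lastTwoWeight; split_ifs <;> rfl

lemma sum_ite_eq_two_mul_card_sub_one [Fintype V] (b : V) :
    ∑ a, (if a = b then 1 else 2) = 2 * Fintype.card V - 1 := by
  have hpos : 0 < Fintype.card V := Fintype.card_pos_iff.mpr ⟨b⟩
  rw [Fintype.sum_eq_add_sum_compl b, if_pos rfl,
    Finset.sum_congr rfl fun a ha => if_neg (by simpa using ha), sum_const,
    card_compl, card_singleton, smul_eq_mul]
  omega

lemma sum_sum_lastTwoWeight [Fintype V] (D : Finset V) :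
    ∑ a, ∑ b, (lastTwoWeight D a b : ℕ) = #D * (2 * Fintype.card V - 1) := by
  have hcolumn : ∀ b, ∑ a, (lastTwoWeight D a b : ℕ) =
      if b ∈ D then 2 * Fintype.card V - 1 else 0 := by
    intro b
    simp only [val_lastTwoWeight]
    split_ifs
    · exact sum_ite_eq_two_mul_card_sub_one b
    · exact sum_const_zero
  rw [Finset.sum_comm]
  simp only [hcolumn]
  rw [Finset.sum_ite_mem, univ_inter, sum_const, smul_eq_mul]

end

theorem stmt10_general [Fintype V] (G : SimpleGraph V) (n : ℕ) (hn : Fintype.card V = n)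
    (t : ℕ) (ht : 2 ≤ t) :
    gammaR (sierpinski G t) ≤ gamma G * n ^ (t - 2) * (2 * n - 1) := by
  classical
  obtain ⟨m, rfl⟩ := Nat.exists_eq_add_of_le' ht
  obtain ⟨D, hD, hcard⟩ := exists_isDomSet_card_eq_gamma G
  calc gammaR (sierpinski G (m + 2))
      ≤ romanWeight fun x => lastTwoWeight D (x (Fin.last m).castSucc) (x (Fin.last (m + 1))) :=
        gammaR_le_romanWeight (isRDF_sierpinski_lastTwoWeight hD m)
    _ = n ^ (m + 2 - 2) * (#D * (2 * n - 1)) := by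
        rw [romanWeight, sum_comp_apply_apply (Fin.castSucc_lt_last _).ne
          (fun a b => (lastTwoWeight D a b : ℕ)), sum_sum_lastTwoWeight, Fintype.card_fin, hn,
          smul_eq_mul]
    _ = gamma G * n ^ (m + 2 - 2) * (2 * n - 1) := by
        rw [hcard]; ring

theorem stmt10 [Fintype V] (G : SimpleGraph V) (n : ℕ) (hn : Fintype.card V = n)
    (hRoman : gammaR G = 2 * gamma G) (t : ℕ) (ht : 2 ≤ t) :
    gammaR (sierpinski G t) ≤ gamma G * n ^ (t - 2) * (2 * n - 1) :=
  stmt10_general G n hn t ht
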